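/- Let G be a finitely generated free group and α : G → G an endomorphism with F_n := im(α^n). Suppose rank(F_n) = rank(F_{n+1}) for some n. Then the sequence (F_k) stabilizes (there exists m with F_m = F_{m+1}) if and only if F_n = F_{n+1}. -/

import Mathlib

/-- The rank of a free group: the cardinality of a basis. -/
noncomputable def freeRank (H : Type*) [Group H] [IsFreeGroup H] : ℕ :=
  Nat.card (IsFreeGroup.Generators H)

/-- The `n`-th iterate `α ^ n` of an endomorphism. -/
def iterHom {G : Type*} [Group G] (α : G →* G) : ℕ → (G →* G)
  | 0 => MonoidHom.id G
  | (n + 1) => α.comp (iterHom α n)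

open Function

namespace StabAux

variable {ι : Type*}

/-- `Up L a r` : some position `j` in `L` holds the letter `(a, true)`, where `r = L.length - 1 - j`
is the position counted from the right. -/
def Up (L : List (ι × Bool)) (a : ι) (r : ℕ) : Prop :=
  ∃ j, L[j]? = some (a, true) ∧ j + r + 1 = L.length

def Down (L : List (ι × Bool)) (a : ι) (r : ℕ) : Prop :=
  ∃ j, L[j]? = some (a, false) ∧ j + r + 1 = L.length

/-- A list with no adjacent cancelling pair. -/
def NoCancel (L : List (ι × Bool)) : Prop :=
  ∀ (j : ℕ) (a : ι) (b : Bool), L[j]? = some (a, b) → L[j+1]? = some (a, !b) → False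

lemma up_lt {L : List (ι × Bool)} {a r} (h : Up L a r) : r + 1 < L.length + 1 := by
  obtain ⟨j, _, hj⟩ := h; omega

lemma down_lt {L : List (ι × Bool)} {a r} (h : Down L a r) : r + 1 < L.length + 1 := by
  obtain ⟨j, _, hj⟩ := h; omega

lemma not_up_and_down {L : List (ι × Bool)} {a a' r} (h : Up L a r) (h' : Down L a' r) : False := by
  obtain ⟨j, hj, hjl⟩ := h; obtain ⟨j', hj', hjl'⟩ := h'
  have : j = j' := by omega
  subst this; rw [hj] at hj'; simp at hj'

lemma not_up_down_succ {L : List (ι × Bool)} (hL : NoCancel L) {a r}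
    (h : Up L a r) (h' : Down L a (r+1)) : False := by
  obtain ⟨j, hj, hjl⟩ := h; obtain ⟨j', hj', hjl'⟩ := h'
  have : j = j' + 1 := by omega
  subst this
  exact hL j' a false hj' (by simpa using hj)

lemma not_down_up_succ {L : List (ι × Bool)} (hL : NoCancel L) {a r}
    (h : Down L a r) (h' : Up L a (r+1)) : False := by
  obtain ⟨j, hj, hjl⟩ := h; obtain ⟨j', hj', hjl'⟩ := h'
  have : j = j' + 1 := by omega
  subst this
  exact hL j' a true hj' (by simpa using hj)

variable (L : List (ι × Bool))

/-- Sources of the partial map attached to the letter `a`. -/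
def Src (a : ι) (x : ℕ) : Prop := Up L a x ∨ ∃ y, x = y + 1 ∧ Down L a y

/-- Targets of the partial map attached to the letter `a`. -/
def Tgt (a : ι) (x : ℕ) : Prop := Down L a x ∨ ∃ y, x = y + 1 ∧ Up L a y

open Classical in
/-- The partial bijection from sources to targets. -/
noncomputable def e (hL : NoCancel L) (a : ι) :
    {x : Fin (L.length + 1) // Src L a x.val} ≃ {x : Fin (L.length + 1) // Tgt L a x.val} where
  toFun := fun ⟨x, hx⟩ =>
    if h : Up L a x.val then
      ⟨⟨x.val + 1, up_lt h⟩, Or.inr ⟨x.val, rfl, h⟩⟩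
    else
      ⟨⟨x.val - 1, by omega⟩, by
        rcases hx with h' | ⟨y, hy, hd⟩
        · exact absurd h' h
        · exact Or.inl (by simpa [hy] using hd)⟩
  invFun := fun ⟨y, hy⟩ =>
    if h : Down L a y.val then
      ⟨⟨y.val + 1, down_lt h⟩, Or.inr ⟨y.val, rfl, h⟩⟩
    else
      ⟨⟨y.val - 1, by omega⟩, by
        rcases hy with h' | ⟨z, hz, hu⟩
        · exact absurd h' h
        · exact Or.inl (by simpa [hz] using hu)⟩
  left_inv := by
    rintro ⟨x, hx⟩
    by_cases h : Up L a x.val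
    · simp only [dif_pos h]
      have hnd : ¬ Down L a (x.val + 1) := fun hd => not_up_down_succ hL h hd
      simp only [dif_neg hnd]
      exact Subtype.ext (Fin.ext (by simp))
    · rcases hx with h' | ⟨y, hy, hd⟩
      · exact absurd h' h
      · simp only [dif_neg h]
        have : x.val - 1 = y := by omega
        simp only [this, dif_pos hd]
        exact Subtype.ext (Fin.ext (by simp [hy]))
  right_inv := by
    rintro ⟨y, hy⟩
    by_cases h : Down L a y.val
    · simp only [dif_pos h]
      have hnu : ¬ Up L a (y.val + 1) := fun hu => not_down_up_succ hL h hu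
      simp only [dif_neg hnu]
      exact Subtype.ext (Fin.ext (by simp))
    · rcases hy with h' | ⟨z, hz, hu⟩
      · exact absurd h' h
      · simp only [dif_neg h]
        have : y.val - 1 = z := by omega
        simp only [this, dif_pos hu]
        exact Subtype.ext (Fin.ext (by simp [hz]))

open Classical in
/-- The permutation attached to the letter `a`. -/
noncomputable def sigma (hL : NoCancel L) (a : ι) : Equiv.Perm (Fin (L.length + 1)) :=
  (e L hL a).extendSubtype

open Classical in
lemma sigma_up {hL : NoCancel L} {a : ι} {r : ℕ} (h : Up L a r) :
    sigma L hL a ⟨r, Nat.lt_of_succ_lt (up_lt h)⟩ = ⟨r + 1, up_lt h⟩ := by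
  have hs : Src L a r := Or.inl h
  rw [sigma, Equiv.extendSubtype_apply_of_mem (e L hL a) _ hs]
  simp only [e, Equiv.coe_fn_mk, dif_pos h]

open Classical in
lemma sigma_down {hL : NoCancel L} {a : ι} {r : ℕ} (h : Down L a r) :
    sigma L hL a ⟨r + 1, down_lt h⟩ = ⟨r, Nat.lt_of_succ_lt (down_lt h)⟩ := by
  have hs : Src L a (r + 1) := Or.inr ⟨r, rfl, h⟩
  rw [sigma, Equiv.extendSubtype_apply_of_mem (e L hL a) _ hs]
  have hnu : ¬ Up L a (r + 1) := fun hu => not_down_up_succ hL h hu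
  simp only [e, Equiv.coe_fn_mk, dif_neg hnu]
  exact Fin.ext (by simp)


lemma prod_drop (L : List (ι × Bool)) (hL : NoCancel L) (d : ℕ) (hd : d ≤ L.length) :
    ((L.drop (L.length - d)).map
        (fun x => cond x.2 (sigma L hL x.1) (sigma L hL x.1)⁻¹)).prod ⟨0, Nat.succ_pos _⟩
      = ⟨d, by omega⟩ := by
  induction d with
  | zero => simp
  | succ d ih =>
    have hd' : d ≤ L.length := by omega
    have hi : L.length - (d + 1) < L.length := by omega
    rw [List.drop_eq_getElem_cons hi]
    have h1 : L.length - (d + 1) + 1 = L.length - d := by omega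
    rw [h1, List.map_cons, List.prod_cons, Equiv.Perm.mul_apply, ih hd']
    rcases hp : L[L.length - (d + 1)]'hi with ⟨a, b⟩
    cases b with
    | false =>
      have hdown : Down L a d :=
        ⟨L.length - (d + 1), by rw [List.getElem?_eq_getElem hi, hp], by omega⟩
      have hsd := sigma_down L (hL := hL) hdown
      show (sigma L hL a)⁻¹ _ = _
      rw [Equiv.Perm.inv_eq_iff_eq]
      exact hsd.symm
    | true =>
      have hup : Up L a d :=
        ⟨L.length - (d + 1), by rw [List.getElem?_eq_getElem hi, hp], by omega⟩
      exact sigma_up L (hL := hL) hup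

variable [DecidableEq ι]

lemma noCancel_toWord (w : FreeGroup ι) : NoCancel w.toWord := by
  intro j a b h1 h2
  set L := w.toWord with hLdef
  rw [List.getElem?_eq_some_iff] at h1 h2
  obtain ⟨hj1, e1⟩ := h1
  obtain ⟨hj2, e2⟩ := h2
  have hdec : L = L.take j ++ (a, b) :: (a, !b) :: L.drop (j + 2) := by
    conv_lhs => rw [← List.take_append_drop j L]
    rw [List.drop_eq_getElem_cons (Nat.lt_of_succ_lt hj2),
      List.drop_eq_getElem_cons hj2, e1, e2]
  exact FreeGroup.reduce.not (p := False)
    (show FreeGroup.reduce L = L.take j ++ (a, b) :: (a, !b) :: L.drop (j + 2) by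
      rw [hLdef, FreeGroup.reduce_toWord, ← hLdef]; exact hdec)

/-- Residual finiteness of free groups: a nontrivial element survives in some finite
symmetric group. -/
theorem exists_perm_hom (w : FreeGroup ι) (hw : w ≠ 1) :
    ∃ (k : ℕ) (f : FreeGroup ι →* Equiv.Perm (Fin (k + 1))), f w ≠ 1 := by
  have hL : NoCancel w.toWord := noCancel_toWord w
  refine ⟨w.toWord.length, FreeGroup.lift (sigma w.toWord hL), fun hcon => ?_⟩
  have hlen : w.toWord.length ≠ 0 := by
    simp only [ne_eq, List.length_eq_zero_iff, FreeGroup.toWord_eq_nil_iff]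
    exact hw
  have h0 : (FreeGroup.lift (sigma w.toWord hL)) (FreeGroup.mk w.toWord) ⟨0, Nat.succ_pos _⟩
      = ⟨w.toWord.length, Nat.lt_succ_self _⟩ := by
    rw [FreeGroup.lift_mk]
    have := prod_drop w.toWord hL w.toWord.length le_rfl
    simpa using this
  rw [FreeGroup.mk_toWord] at h0
  rw [hcon] at h0
  simp only [Equiv.Perm.coe_one, id_eq, Fin.mk.injEq] at h0
  exact hlen h0.symm


/-- Malcev's argument: a surjective endomorphism of a finitely generated free group
is injective. -/
theorem freeGroup_surj_inj {ι : Type*} [Finite ι] (φ : FreeGroup ι →* FreeGroup ι)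
    (hφ : Surjective φ) : Injective φ := by
  classical
  rw [injective_iff_map_eq_one]
  intro w hw1
  by_contra hw
  obtain ⟨k, π, hπ⟩ := exists_perm_hom w hw
  haveI : Finite (FreeGroup ι →* Equiv.Perm (Fin (k + 1))) :=
    Finite.of_equiv _ (FreeGroup.lift (β := Equiv.Perm (Fin (k + 1))))
  have hinj : Injective (fun ψ : FreeGroup ι →* Equiv.Perm (Fin (k + 1)) => ψ.comp φ) :=
    fun ψ₁ ψ₂ hh => (MonoidHom.cancel_right hφ).mp hh
  obtain ⟨ψ, hψ⟩ := Finite.injective_iff_surjective.mp hinj π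
  apply hπ
  rw [← hψ]
  show ψ (φ w) = 1
  rw [hw1, map_one]

/-- If a free group is finitely generated, its set of generators is finite. -/
theorem finite_of_freeGroup_fg {ι : Type*} (h : Group.FG (FreeGroup ι)) : Finite ι := by
  classical
  obtain ⟨S, hSc, hSf⟩ := Group.fg_iff.mp h
  set J : Set ι := ⋃ s ∈ S, Prod.fst '' {p | p ∈ s.toWord} with hJ
  have hJfin : J.Finite := Set.Finite.biUnion hSf fun s _ => (s.toWord.finite_toSet).image _
  have hmem : ∀ i : ι, i ∈ J := by
    intro i
    by_contra hi
    set χ : FreeGroup ι →* Multiplicative ℤ :=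
      FreeGroup.lift (fun a => if a = i then Multiplicative.ofAdd (1 : ℤ) else 1) with hχ
    have hker : S ⊆ (χ.ker : Set (FreeGroup ι)) := by
      intro s hs
      show χ s = 1
      rw [← FreeGroup.mk_toWord (x := s), FreeGroup.lift_mk]
      apply List.prod_eq_one
      intro x hx
      rw [List.mem_map] at hx
      obtain ⟨p, hp, rfl⟩ := hx
      have hpi : p.1 ≠ i := by
        intro hcon
        exact hi (hJ ▸ Set.mem_biUnion hs ⟨p, hp, hcon⟩)
      cases hb : p.2 <;> simp [hpi]
    have htop : (⊤ : Subgroup (FreeGroup ι)) ≤ χ.ker := hSc ▸ (Subgroup.closure_le _).mpr hker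
    have h1 : χ (FreeGroup.of i) = 1 := htop (Subgroup.mem_top _)
    rw [hχ, FreeGroup.lift_apply_of, if_pos rfl] at h1
    simp at h1
  exact Set.finite_univ_iff.mp (hJfin.subset fun i _ => hmem i)

/-- A free group on finitely many generators is finitely generated. -/
theorem fg_of_isFreeGroup (H : Type*) [Group H] [IsFreeGroup H]
    [Finite (IsFreeGroup.Generators H)] : Group.FG H := by
  haveI : Group.FG (FreeGroup (IsFreeGroup.Generators H)) :=
    Group.fg_iff.mpr ⟨Set.range FreeGroup.of, FreeGroup.closure_range_of _,
      Set.finite_range _⟩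
  exact Group.fg_of_surjective (f := (IsFreeGroup.toFreeGroup H).symm.toMonoidHom)
    (IsFreeGroup.toFreeGroup H).symm.surjective

theorem finite_generators_of_fg (H : Type*) [Group H] [IsFreeGroup H] [Group.FG H] :
    Finite (IsFreeGroup.Generators H) :=
  finite_of_freeGroup_fg (Group.fg_of_surjective
    (f := (IsFreeGroup.toFreeGroup H).toMonoidHom) (IsFreeGroup.toFreeGroup H).surjective)

/-- A surjective homomorphism between finitely generated free groups of the same rank
is injective. -/
theorem surj_inj_of_rank_eq {H K : Type*} [Group H] [Group K] [IsFreeGroup H] [IsFreeGroup K]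
    [Finite (IsFreeGroup.Generators H)] [Finite (IsFreeGroup.Generators K)]
    (hr : Nat.card (IsFreeGroup.Generators H) = Nat.card (IsFreeGroup.Generators K))
    (φ : H →* K) (hφ : Surjective φ) : Injective φ := by
  haveI := Fintype.ofFinite (IsFreeGroup.Generators H)
  haveI := Fintype.ofFinite (IsFreeGroup.Generators K)
  rw [Nat.card_eq_fintype_card, Nat.card_eq_fintype_card] at hr
  let eG := Fintype.equivOfCardEq hr
  let Φ : FreeGroup (IsFreeGroup.Generators H) →* FreeGroup (IsFreeGroup.Generators H) :=
    (((FreeGroup.freeGroupCongr eG).symm.toMonoidHom.comp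
        (IsFreeGroup.toFreeGroup K).toMonoidHom).comp φ).comp
      (IsFreeGroup.toFreeGroup H).symm.toMonoidHom
  have hΦs : Surjective Φ := by
    intro z
    obtain ⟨y, hy⟩ := hφ ((IsFreeGroup.toFreeGroup K).symm ((FreeGroup.freeGroupCongr eG) z))
    refine ⟨IsFreeGroup.toFreeGroup H y, ?_⟩
    simp only [Φ, MonoidHom.coe_comp, Function.comp_apply, MulEquiv.coe_toMonoidHom,
      MulEquiv.symm_apply_apply, MulEquiv.apply_symm_apply, hy]
  have hΦi := freeGroup_surj_inj Φ hΦs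
  intro x y hxy
  have h2 : Φ (IsFreeGroup.toFreeGroup H x) = Φ (IsFreeGroup.toFreeGroup H y) := by
    simp only [Φ, MonoidHom.coe_comp, Function.comp_apply, MulEquiv.coe_toMonoidHom,
      MulEquiv.symm_apply_apply, hxy]
  exact (IsFreeGroup.toFreeGroup H).injective (hΦi h2)

end StabAux
namespace StabAux


variable {G : Type*} [Group G] (α : G →* G)

lemma iterHom_succ' (n : ℕ) : iterHom α (n + 1) = (iterHom α n).comp α := by
  induction n with
  | zero => ext x; rfl
  | succ n ih =>
    show α.comp (iterHom α (n + 1)) = _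
    conv_lhs => rw [ih]
    ext x; rfl

lemma range_succ (m : ℕ) : (iterHom α (m + 1)).range = ((iterHom α m).range).map α :=
  MonoidHom.range_comp α (iterHom α m)

lemma range_antitone : Antitone (fun m => (iterHom α m).range) := by
  apply antitone_nat_of_succ_le
  intro m
  rintro x ⟨y, rfl⟩
  exact ⟨α y, by rw [iterHom_succ']; rfl⟩

lemma range_eq_succ_of_eq {m : ℕ} (hm : (iterHom α m).range = (iterHom α (m + 1)).range) :
    ∀ d, (iterHom α (m + d)).range = (iterHom α (m + d + 1)).range := by
  intro d
  induction d with
  | zero => exact hm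
  | succ d ih =>
    show (iterHom α (m + d + 1)).range = (iterHom α (m + d + 1 + 1)).range
    rw [range_succ α (m + d + 1), ← ih, ← range_succ α (m + d)]
    exact ih

end StabAux

theorem stabilizes_iff_of_rank_eq {G : Type u} [Group G] [IsFreeGroup G]
    [Finite (IsFreeGroup.Generators G)] (α : G →* G) (n : ℕ)
    (h : freeRank (iterHom α n).range = freeRank (iterHom α (n + 1)).range) :
    (∃ m : ℕ, (iterHom α m).range = (iterHom α (m + 1)).range) ↔
      (iterHom α n).range = (iterHom α (n + 1)).range := by
  open StabAux in
  constructor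
  · rintro ⟨m, hm⟩
    haveI : Group.FG G := StabAux.fg_of_isFreeGroup G
    haveI : Group.FG (iterHom α n).range := Group.fg_range _
    haveI : Group.FG (iterHom α (n + 1)).range := Group.fg_range _
    haveI := StabAux.finite_generators_of_fg ↥(iterHom α n).range
    haveI := StabAux.finite_generators_of_fg ↥(iterHom α (n + 1)).range
    have hmem : ∀ x : (iterHom α n).range, α (x : G) ∈ (iterHom α (n + 1)).range := by
      intro x
      rw [StabAux.range_succ α n]
      exact Subgroup.mem_map.mpr ⟨(x : G), x.2, rfl⟩
    let β : (iterHom α n).range →* (iterHom α (n + 1)).range :=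
      (α.comp (iterHom α n).range.subtype).codRestrict _ hmem
    have hβs : Function.Surjective β := by
      rintro ⟨y, hy⟩
      rw [StabAux.range_succ α n] at hy
      obtain ⟨x, hx, rfl⟩ := Subgroup.mem_map.mp hy
      exact ⟨⟨x, hx⟩, Subtype.ext rfl⟩
    have hβi : Function.Injective β := StabAux.surj_inj_of_rank_eq h β hβs
    have hinjOn : ∀ x ∈ (iterHom α n).range, ∀ y ∈ (iterHom α n).range, α x = α y → x = y := by
      intro x hx y hy hxy
      have h2 : β ⟨x, hx⟩ = β ⟨y, hy⟩ := Subtype.ext hxy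
      exact Subtype.ext_iff.mp (hβi h2)
    have down : ∀ d, (iterHom α (n + d)).range = (iterHom α (n + d + 1)).range →
        (iterHom α n).range = (iterHom α (n + 1)).range := by
      intro d
      induction d with
      | zero => exact fun hh => hh
      | succ d ih =>
        intro hh
        apply ih
        apply le_antisymm _ (StabAux.range_antitone α (Nat.le_succ (n + d)))
        intro x hx
        have hx' : α x ∈ ((iterHom α (n + d + 1)).range).map α := by
          rw [← StabAux.range_succ α (n + d + 1)]
          rw [show n + d + 1 + 1 = n + (d + 1) + 1 from rfl, ← hh]
          rw [show n + (d + 1) = n + d + 1 from rfl, StabAux.range_succ α (n + d)]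
          exact Subgroup.mem_map.mpr ⟨x, hx, rfl⟩
        obtain ⟨y, hy, hyx⟩ := Subgroup.mem_map.mp hx'
        have hxn : x ∈ (iterHom α n).range := StabAux.range_antitone α (Nat.le_add_right n d) hx
        have hyn : y ∈ (iterHom α n).range :=
          StabAux.range_antitone α (Nat.le_add_right n (d + 1)) hy
        exact (hinjOn y hyn x hxn hyx) ▸ hy
    rcases le_total m n with hmn | hnm
    · have := StabAux.range_eq_succ_of_eq α hm (n - m)
      rwa [show m + (n - m) = n by omega] at this
    · apply down (m - n)
      rwa [show n + (m - n) = m by omega]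
  · intro hn
    exact ⟨n, hn⟩
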